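/- The conformal Hessian and conformal elasticity sequences are complexes: (i) for every C^∞ scalar field u : ℝ³ → ℝ, sym(curl(dev(hess u))) = 0 identically; (ii) for every C^∞ matrix field σ : ℝ³ → ℝ^{3×3} with symmetric traceless values, div(div(sym(curl σ))) = 0 and div(cott σ) = 0 identically; (iii) for every C^∞ vector field v : ℝ³ → ℝ³, cott(dev(sym(grad v))) = 0 identically. -/

import Mathlib

noncomputable section

open Matrix

/-- Vectors in ℝ³. -/
abbrev V3 := Fin 3 → ℝ
/-- 3×3 real matrices. -/
abbrev M3 := Matrix (Fin 3) (Fin 3) ℝ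

/-- Partial derivative ∂ᵢ of a scalar field. -/
def pd (i : Fin 3) (f : V3 → ℝ) : V3 → ℝ :=
  fun x => fderiv ℝ f x (Pi.single i 1)

/-- Gradient matrix of a vector field: (grad v)_{ij} = ∂ⱼ vᵢ. -/
def vgrad (v : V3 → V3) : V3 → M3 :=
  fun x => Matrix.of fun i j => pd j (fun y => v y i) x

/-- Divergence of a vector field. -/
def vdiv (v : V3 → V3) : V3 → ℝ :=
  fun x => ∑ i, pd i (fun y => v y i) x

/-- Cross product on ℝ³. -/
def cross (a b : V3) : V3 :=
  fun i => a (i + 1) * b (i + 2) - a (i + 2) * b (i + 1)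

/-- Curl of a vector field. -/
def vcurl (v : V3 → V3) : V3 → V3 :=
  fun x i => pd (i + 1) (fun y => v y (i + 2)) x - pd (i + 2) (fun y => v y (i + 1)) x

/-- Row-wise curl of a matrix field. -/
def mcurl (τ : V3 → M3) : V3 → M3 :=
  fun x => Matrix.of fun i j =>
    pd (j + 1) (fun y => τ y i (j + 2)) x - pd (j + 2) (fun y => τ y i (j + 1)) x

/-- Row-wise divergence of a matrix field. -/
def mdiv (τ : V3 → M3) : V3 → V3 :=
  fun x i => ∑ j, pd j (fun y => τ y i j) x

/-- Symmetric part of a matrix. -/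
def msym (A : M3) : M3 := (1 / 2 : ℝ) • (A + Aᵀ)

/-- Deviatoric (trace-free) part of a matrix. -/
def devm (A : M3) : M3 := A - ((1 / 3 : ℝ) * A.trace) • (1 : M3)

/-- The skew-symmetric matrix associated to a vector: mskw(ω) y = ω × y. -/
def mskw (w : V3) : M3 := !![0, -w 2, w 1; w 2, 0, -w 0; -w 1, w 0, 0]

/-- vskw(A) := mskw⁻¹(skw A). -/
def vskw (A : M3) : V3 :=
  (1 / 2 : ℝ) • ![A 2 1 - A 1 2, A 0 2 - A 2 0, A 1 0 - A 0 1]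

/-- S⁻¹(A) := Aᵀ − (1/2)(tr A)I. -/
def Sinv (A : M3) : M3 := Aᵀ - ((1 / 2 : ℝ) * A.trace) • (1 : M3)

/-- S(A) := Aᵀ − (tr A)I. -/
def Sop (A : M3) : M3 := Aᵀ - A.trace • (1 : M3)

/-- Incompatibility operator inc τ := curl (S⁻¹ (curl τ)). -/
def inc (τ : V3 → M3) : V3 → M3 := mcurl fun x => Sinv (mcurl τ x)

/-- Linearized Cotton–York operator cott τ := curl (S⁻¹ (inc τ)). -/
def cott (τ : V3 → M3) : V3 → M3 := mcurl fun x => Sinv (inc τ x)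

/-- Hessian matrix of a scalar field. -/
def hess (u : V3 → ℝ) : V3 → M3 :=
  fun x => Matrix.of fun i j => pd i (pd j u) x

/-- Euclidean dot product on ℝ³. -/
def dotp (a b : V3) : ℝ := ∑ i, a i * b i

/-- Smoothness of a vector field (componentwise C^∞). -/
def SmoothV (v : V3 → V3) : Prop := ∀ i, ContDiff ℝ (⊤ : ℕ∞) fun x => v x i

/-- Smoothness of a matrix field (entrywise C^∞). -/
def SmoothM (τ : V3 → M3) : Prop := ∀ i j, ContDiff ℝ (⊤ : ℕ∞) fun x => τ x i j

/-- Conformal Killing fields. -/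
def CK (v : V3 → V3) : Prop :=
  ∃ (a c d : V3) (b : ℝ), ∀ x,
    v x = dotp x x • a - (2 * dotp a x) • x + b • x + cross c x + d

/-- Rigid motions. -/
def RM (v : V3 → V3) : Prop := ∃ a b : V3, ∀ x, v x = cross a x + b

/-- Lowest-order Raviart–Thomas fields. -/
def RT (v : V3 → V3) : Prop := ∃ (a : V3) (b : ℝ), ∀ x, v x = a + b • x

/-- Polynomial scalar functions of total degree at most k. -/
def PolyLe (k : ℕ) (f : V3 → ℝ) : Prop :=
  ∃ p : MvPolynomial (Fin 3) ℝ, p.totalDegree ≤ k ∧ ∀ x, f x = MvPolynomial.eval x p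

/-- Matrix fields with entries in P_k and values symmetric traceless. -/
def PolyLeST (k : ℕ) (τ : V3 → M3) : Prop :=
  (∀ i j, PolyLe k fun x => τ x i j) ∧ (∀ x, (τ x)ᵀ = τ x) ∧ ∀ x, (τ x).trace = 0


-- ===== Helper lemmas =====

theorem contDiff_pd {f : V3 → ℝ} (hf : ContDiff ℝ (⊤ : ℕ∞) f) (i : Fin 3) : ContDiff ℝ (⊤ : ℕ∞) (pd i f) := by
  have h1 : ContDiff ℝ (⊤ : ℕ∞) (fun y => fderiv ℝ f y) := hf.fderiv_right (by simp)
  exact (ContinuousLinearMap.apply ℝ ℝ (Pi.single i 1)).contDiff.comp h1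

attribute [fun_prop] contDiff_pd

theorem pd_comm {f : V3 → ℝ} (hf : ContDiff ℝ (⊤ : ℕ∞) f) (i j : Fin 3) :
    pd i (pd j f) = pd j (pd i f) := by
  funext x
  have hsym := (hf.contDiffAt (x := x)).isSymmSndFDerivAt (by rw [minSmoothness_of_isRCLikeNormedField]; exact WithTop.coe_le_coe.2 (le_top : (2 : ℕ∞) ≤ ⊤))
  have hd : ContDiff ℝ (⊤ : ℕ∞) (fun y => fderiv ℝ f y) := hf.fderiv_right (by simp)
  have key : ∀ w u : V3, fderiv ℝ (fun y => fderiv ℝ f y w) x u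
      = fderiv ℝ (fderiv ℝ f) x u w := by
    intro w u
    rw [fderiv_clm_apply (hd.differentiable (by simp) x) (differentiableAt_const w)]
    simp
  show fderiv ℝ (fun y => fderiv ℝ f y (Pi.single j 1)) x (Pi.single i 1)
      = fderiv ℝ (fun y => fderiv ℝ f y (Pi.single i 1)) x (Pi.single j 1)
  rw [key, key, hsym]

theorem pd_add {f g : V3 → ℝ} (hf : ContDiff ℝ (⊤ : ℕ∞) f) (hg : ContDiff ℝ (⊤ : ℕ∞) g) (i : Fin 3) :
    pd i (fun y => f y + g y) = fun x => pd i f x + pd i g x := by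
  funext x
  simp only [pd, fderiv_fun_add (hf.differentiable (by simp) x) (hg.differentiable (by simp) x)]
  simp

theorem pd_sub {f g : V3 → ℝ} (hf : ContDiff ℝ (⊤ : ℕ∞) f) (hg : ContDiff ℝ (⊤ : ℕ∞) g) (i : Fin 3) :
    pd i (fun y => f y - g y) = fun x => pd i f x - pd i g x := by
  funext x
  simp only [pd, fderiv_fun_sub (hf.differentiable (by simp) x) (hg.differentiable (by simp) x)]
  simp

theorem pd_cmul {f : V3 → ℝ} (c : ℝ) (hf : ContDiff ℝ (⊤ : ℕ∞) f) (i : Fin 3) :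
    pd i (fun y => c * f y) = fun x => c * pd i f x := by
  funext x
  simp only [pd, fderiv_const_mul (hf.differentiable (by simp) x) c]
  simp

theorem pd_mulc {f : V3 → ℝ} (c : ℝ) (hf : ContDiff ℝ (⊤ : ℕ∞) f) (i : Fin 3) :
    pd i (fun y => f y * c) = fun x => pd i f x * c := by
  have := pd_cmul c hf i
  simp only [mul_comm] at this ⊢
  exact this

theorem pd_neg {f : V3 → ℝ} (i : Fin 3) :
    pd i (fun y => -f y) = fun x => -pd i f x := by
  funext x; simp [pd]

theorem pd_const (c : ℝ) (i : Fin 3) : pd i (fun _ => c) = fun _ => 0 := by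
  funext x; simp [pd]

theorem pd_swap10 {f : V3 → ℝ} (hf : ContDiff ℝ (⊤ : ℕ∞) f) :
    pd 1 (pd 0 f) = pd 0 (pd 1 f) := pd_comm hf 1 0

theorem pd_swap20 {f : V3 → ℝ} (hf : ContDiff ℝ (⊤ : ℕ∞) f) :
    pd 2 (pd 0 f) = pd 0 (pd 2 f) := pd_comm hf 2 0

theorem pd_swap21 {f : V3 → ℝ} (hf : ContDiff ℝ (⊤ : ℕ∞) f) :
    pd 2 (pd 1 f) = pd 1 (pd 2 f) := pd_comm hf 2 1

-- ===== test: part (ii) pieces =====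

theorem mdiv_mcurl_zero (τ : V3 → M3) (hτ : SmoothM τ) (x : V3) : mdiv (mcurl τ) x = 0 := by
  have hτ' : ∀ i j, ContDiff ℝ (⊤ : ℕ∞) fun x => τ x i j := hτ
  funext i
  fin_cases i <;>
  · simp only [mdiv, mcurl, Matrix.of_apply, Fin.sum_univ_three, Fin.isValue, Fin.reduceAdd]
    simp (disch := fun_prop) only [pd_sub, pd_swap10, pd_swap20, pd_swap21]
    ring_nf
    simp [Pi.zero_apply]

theorem divdiv_symcurl_zero (σ : V3 → M3) (hσ : SmoothM σ) (x : V3) :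
    vdiv (mdiv fun y => msym (mcurl σ y)) x = 0 := by
  have hσ' : ∀ i j, ContDiff ℝ (⊤ : ℕ∞) fun x => σ x i j := hσ
  simp only [vdiv, mdiv, msym, mcurl, Matrix.of_apply, Fin.sum_univ_three, Fin.isValue,
    Fin.reduceAdd, Matrix.smul_apply, Matrix.add_apply, Matrix.transpose_apply, smul_eq_mul]
  simp (disch := fun_prop) only [pd_add, pd_sub, pd_cmul, pd_mulc, pd_neg, pd_const,
    pd_swap10, pd_swap20, pd_swap21]
  ring

theorem SmoothM_mcurl {τ : V3 → M3} (hτ : SmoothM τ) : SmoothM (mcurl τ) := by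
  have hτ' : ∀ i j, ContDiff ℝ (⊤ : ℕ∞) fun x => τ x i j := hτ
  intro i j
  simp only [mcurl, Matrix.of_apply]
  fun_prop

theorem SmoothM_Sinv {τ : V3 → M3} (hτ : SmoothM τ) : SmoothM (fun x => Sinv (τ x)) := by
  have hτ' : ∀ i j, ContDiff ℝ (⊤ : ℕ∞) fun x => τ x i j := hτ
  intro i j
  simp only [Sinv, Matrix.sub_apply, Matrix.transpose_apply, Matrix.smul_apply,
    Matrix.trace_fin_three, smul_eq_mul, Matrix.one_apply]
  fun_prop

theorem SmoothM_inc {τ : V3 → M3} (hτ : SmoothM τ) : SmoothM (inc τ) :=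
  SmoothM_mcurl (SmoothM_Sinv (SmoothM_mcurl hτ))

theorem mdiv_cott_zero (σ : V3 → M3) (hσ : SmoothM σ) (x : V3) : mdiv (cott σ) x = 0 :=
  mdiv_mcurl_zero _ (SmoothM_Sinv (SmoothM_inc hσ)) x

theorem part_i (u : V3 → ℝ) (hu : ContDiff ℝ (⊤ : ℕ∞) u) (x : V3) :
    msym (mcurl (fun y => devm (hess u y)) x) = 0 := by
  ext i j
  fin_cases i <;> fin_cases j <;>
  · simp only [Fin.reduceFinMk, Fin.isValue, msym, mcurl, devm, hess, Matrix.of_apply, Fin.reduceAdd,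
      Matrix.smul_apply, Matrix.add_apply, Matrix.sub_apply, Matrix.transpose_apply,
      Matrix.trace_fin_three, Matrix.one_apply, smul_eq_mul, Matrix.zero_apply,
      Fin.reduceEq, reduceIte, sub_zero, mul_zero, zero_mul, mul_one, one_mul]
    simp (disch := fun_prop) only [pd_add, pd_sub, pd_cmul, pd_mulc, pd_neg, pd_const,
      pd_swap10, pd_swap20, pd_swap21]
    ring

set_option maxHeartbeats 4000000 in
theorem part_iii (v : V3 → V3) (hv : SmoothV v) (x : V3) :
    cott (fun y => devm (msym (vgrad v y))) x = 0 := by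
  have hv' : ∀ i, ContDiff ℝ (⊤ : ℕ∞) fun x => v x i := hv
  ext i j
  fin_cases i <;> fin_cases j <;>
  · simp only [Fin.reduceFinMk, Fin.isValue, cott, inc, Sinv, mcurl, devm, msym, vgrad,
      Matrix.of_apply, Fin.reduceAdd, Matrix.smul_apply, Matrix.add_apply, Matrix.sub_apply,
      Matrix.transpose_apply, Matrix.trace_fin_three, Matrix.one_apply, smul_eq_mul,
      Fin.reduceEq, reduceIte, sub_zero, mul_zero, zero_mul, mul_one, one_mul,
      Matrix.zero_apply]
    simp (disch := fun_prop) only [pd_add, pd_sub, pd_cmul, pd_mulc, pd_neg, pd_const,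
      pd_swap10, pd_swap20, pd_swap21]
    ring

/-- the conformal Hessian and conformal elasticity sequences are complexes. -/
theorem conformal_sequences_are_complexes :
    (∀ u : V3 → ℝ, ContDiff ℝ (⊤ : ℕ∞) u →
      ∀ x, msym (mcurl (fun y => devm (hess u y)) x) = 0) ∧
    (∀ σ : V3 → M3, SmoothM σ → (∀ x, (σ x)ᵀ = σ x) → (∀ x, (σ x).trace = 0) →
      (∀ x, vdiv (mdiv fun y => msym (mcurl σ y)) x = 0) ∧ ∀ x, mdiv (cott σ) x = 0) ∧
    (∀ v : V3 → V3, SmoothV v →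
      ∀ x, cott (fun y => devm (msym (vgrad v y))) x = 0) := by
  refine ⟨part_i, fun σ hσ _ _ => ⟨divdiv_symcurl_zero σ hσ, mdiv_cott_zero σ hσ⟩, part_iii⟩

end
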